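/- arXiv:1411.4841 — 2 statements merged into one kernel-verified Lean document; each statement's English description precedes it below -/
import Mathlib

section
/- Let Σ_U = diag((I + Pᵀ)(ρ·μ)) − Pᵀ diag(ρ·μ) − diag(ρ·μ) P where ρ·μ = λ (I − Pᵀ)^{-1} a for a probability vector a, sub-stochastic matrix P with I − P invertible, and λ > 0. Then with τ = (I − P)^{-1} m and m the vector of phase means, the quadratic form τᵀ (λ diag(a) + Σ_U) τ = 2 λ mᵀ (I − Pᵀ)^{-1} diag(m) (I − Pᵀ)^{-1} a. -/
open Matrix

/-- Covariance computation (equations (7.6)–(7.9)): with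
`ρ·μ = λ (I - Pᵀ)⁻¹ a`, `Σ_U = diag((I + Pᵀ)(ρ·μ)) - Pᵀ diag(ρ·μ) - diag(ρ·μ) P`
and `τ = (I - P)⁻¹ m`, the quadratic form
`τᵀ (λ diag(a) + Σ_U) τ = 2 λ mᵀ (I - Pᵀ)⁻¹ diag(m) (I - Pᵀ)⁻¹ a`. -/
theorem covariance_quadratic_form (F : ℕ) (a m : Fin F → ℝ)
    (P : Matrix (Fin F) (Fin F) ℝ)
    (ha : ∀ i, 0 ≤ a i) (hasum : ∑ i, a i = 1) (hm : ∀ i, 0 < m i)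
    (hPnn : ∀ i j, 0 ≤ P i j) (hPsub : ∀ i, ∑ j, P i j ≤ 1)
    (hinv : IsUnit (1 - P)) (lam : ℝ) (hlam : 0 < lam) :
    ((1 - P)⁻¹.mulVec m) ⬝ᵥ
        ((lam • Matrix.diagonal a +
          (Matrix.diagonal ((1 + Pᵀ).mulVec (lam • ((1 - Pᵀ)⁻¹.mulVec a)))
            - Pᵀ * Matrix.diagonal (lam • ((1 - Pᵀ)⁻¹.mulVec a))
            - Matrix.diagonal (lam • ((1 - Pᵀ)⁻¹.mulVec a)) * P)).mulVec
          ((1 - P)⁻¹.mulVec m)) =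
      2 * lam * (m ⬝ᵥ (1 - Pᵀ)⁻¹.mulVec
        ((Matrix.diagonal m).mulVec ((1 - Pᵀ)⁻¹.mulVec a))) := by
  have hdet : IsUnit (1 - P).det := (Matrix.isUnit_iff_isUnit_det _).mp hinv
  have hBt : (1 : Matrix (Fin F) (Fin F) ℝ) - Pᵀ = (1 - P)ᵀ := by
    simp [Matrix.transpose_sub]
  have hdetT : IsUnit ((1 - P)ᵀ).det := by rw [Matrix.det_transpose]; exact hdet
  rw [hBt]
  set B : Matrix (Fin F) (Fin F) ℝ := 1 - P with hB
  set v : Fin F → ℝ := (Bᵀ)⁻¹.mulVec a with hv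
  set τ : Fin F → ℝ := B⁻¹.mulVec m with hτ
  have hBv : Bᵀ.mulVec v = a := by
    rw [hv, Matrix.mulVec_mulVec, Matrix.mul_nonsing_inv _ hdetT, Matrix.one_mulVec]
  have hBτ : B.mulVec τ = m := by
    rw [hτ, Matrix.mulVec_mulVec, Matrix.mul_nonsing_inv _ hdet, Matrix.one_mulVec]
  have ha' : a = v - Pᵀ.mulVec v := by
    rw [← hBv, hB, Matrix.transpose_sub, Matrix.transpose_one, Matrix.sub_mulVec,
      Matrix.one_mulVec]
  have hm' : m = τ - P.mulVec τ := by
    rw [← hBτ, hB, Matrix.sub_mulVec, Matrix.one_mulVec]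
  -- collapse the diagonal part
  have hvec : lam • a + (1 + Pᵀ).mulVec (lam • v) = (2 * lam) • v := by
    rw [Matrix.mulVec_smul, Matrix.add_mulVec, Matrix.one_mulVec, ha']
    ext i
    simp [smul_sub, smul_add]
    ring
  have hvec' : ∀ i, lam * a i + ((1 + Pᵀ).mulVec (lam • v)) i = 2 * lam * v i := by
    intro i
    have := congrFun hvec i
    simpa [smul_eq_mul] using this
  have hMat : lam • Matrix.diagonal a +
      (Matrix.diagonal ((1 + Pᵀ).mulVec (lam • v))
        - Pᵀ * Matrix.diagonal (lam • v)
        - Matrix.diagonal (lam • v) * P)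
      = (2 * lam) • Matrix.diagonal v
        - lam • (Pᵀ * Matrix.diagonal v)
        - lam • (Matrix.diagonal v * P) := by
    rw [Matrix.diagonal_smul, Matrix.mul_smul, Matrix.smul_mul]
    ext i j
    by_cases h : i = j
    · subst h
      simp only [Matrix.add_apply, Matrix.sub_apply, Matrix.smul_apply,
        Matrix.diagonal_apply_eq, smul_eq_mul]
      linarith [hvec' i]
    · simp only [Matrix.add_apply, Matrix.sub_apply, Matrix.smul_apply,
        Matrix.diagonal_apply_ne _ h, smul_eq_mul]
      ring
  rw [hMat]
  -- expand the quadratic form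
  have hdiag : ∀ w u : Fin F → ℝ, (Matrix.diagonal w).mulVec u = fun i => w i * u i := by
    intro w u; ext i; simp [Matrix.mulVec_diagonal]
  have hT23 : τ ⬝ᵥ (Pᵀ * Matrix.diagonal v).mulVec τ
      = (P.mulVec τ) ⬝ᵥ ((Matrix.diagonal v).mulVec τ) := by
    rw [← Matrix.mulVec_mulVec, Matrix.dotProduct_mulVec, Matrix.vecMul_transpose]
  have hT3 : τ ⬝ᵥ (Matrix.diagonal v * P).mulVec τ
      = (P.mulVec τ) ⬝ᵥ ((Matrix.diagonal v).mulVec τ) := by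
    rw [← Matrix.mulVec_mulVec, hdiag, hdiag]
    simp [dotProduct]
    exact Finset.sum_congr rfl fun i _ => by ring
  rw [Matrix.sub_mulVec, Matrix.sub_mulVec, Matrix.smul_mulVec,
    Matrix.smul_mulVec, Matrix.smul_mulVec,
    dotProduct_sub, dotProduct_sub,
    dotProduct_smul, dotProduct_smul, dotProduct_smul,
    hT23, hT3]
  -- LHS = 2*lam*((τ - Pτ) ⬝ᵥ diag v τ) = 2*lam*(m ⬝ᵥ diag v τ)
  have hLHS : (2 * lam) • (τ ⬝ᵥ (Matrix.diagonal v).mulVec τ)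
      - lam • ((P.mulVec τ) ⬝ᵥ ((Matrix.diagonal v).mulVec τ))
      - lam • ((P.mulVec τ) ⬝ᵥ ((Matrix.diagonal v).mulVec τ))
      = 2 * lam * (m ⬝ᵥ (Matrix.diagonal v).mulVec τ) := by
    rw [hm']
    simp [sub_dotProduct, smul_eq_mul]
    ring
  rw [hLHS]
  -- RHS
  have hRHS : m ⬝ᵥ (Bᵀ)⁻¹.mulVec ((Matrix.diagonal m).mulVec v)
      = m ⬝ᵥ (Matrix.diagonal v).mulVec τ := by
    rw [← Matrix.transpose_nonsing_inv, Matrix.dotProduct_mulVec, Matrix.vecMul_transpose,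
      ← hτ]
    simp only [dotProduct, Matrix.mulVec_diagonal]
    exact Finset.sum_congr rfl fun i _ => by ring
  rw [hRHS]
end

section
/- Let η ∈ ℝ^L maximize η ↦ Σ_{r∈S} p_r [ log(Σ_l η_l A_{l,r}) − Σ_l η_l c_l ] over η ≥ 0, where p is a probability vector on S, A is a nonnegative matrix with Σ_l A_{l,r} ≥ 1 for every r ∈ S, and c_l > 0 for all relevant l. Then any maximizer η satisfies |η| ≤ K for a constant K depending only on A, c and not on p. -/
open Matrix

/-- Uniform boundedness of the dual Lagrange multipliers (proof of Lemma 5.5):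
there is a constant `K`, depending only on `A` and `c`, such that any `η ≥ 0`
maximizing `η ↦ ∑ r, p r * (log (∑ l, η l * A l r) - ∑ l, η l * c l)` over
`η ≥ 0`, for any probability vector `p`, satisfies `η l ≤ K` for all `l`. -/
theorem dual_multipliers_bounded (L S : ℕ)
    (A : Matrix (Fin L) (Fin S) ℝ) (c : Fin L → ℝ)
    (hA : ∀ l r, 0 ≤ A l r) (hA1 : ∀ r, 1 ≤ ∑ l, A l r) (hc : ∀ l, 0 < c l) :
    ∃ K : ℝ, ∀ p : Fin S → ℝ, (∀ r, 0 ≤ p r) → (∑ r, p r) = 1 →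
      ∀ η : Fin L → ℝ, (∀ l, 0 ≤ η l) →
        (∀ η' : Fin L → ℝ, (∀ l, 0 ≤ η' l) →
          ∑ r, p r * (Real.log (∑ l, η' l * A l r) - ∑ l, η' l * c l) ≤
            ∑ r, p r * (Real.log (∑ l, η l * A l r) - ∑ l, η l * c l)) →
        ∀ l, η l ≤ K := by
  set M : ℝ := 1 + ∑ l, ∑ r, A l r with hMdef
  have hsumA : (0:ℝ) ≤ ∑ l, ∑ r, A l r :=
    Finset.sum_nonneg fun l _ => Finset.sum_nonneg fun r _ => hA l r
  have hM1 : (1:ℝ) ≤ M := by simp [hMdef]; linarith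
  have hAM : ∀ l r, A l r ≤ M := by
    intro l r
    have h1 : A l r ≤ ∑ r, A l r :=
      Finset.single_le_sum (fun r _ => hA l r) (Finset.mem_univ r)
    have h2 : (∑ r, A l r) ≤ ∑ l, ∑ r, A l r :=
      Finset.single_le_sum (fun l _ => Finset.sum_nonneg fun r _ => hA l r)
        (Finset.mem_univ l)
    simp only [hMdef]; linarith
  set I : ℝ := ∑ l, (c l)⁻¹ with hIdef
  have hI0 : (0:ℝ) ≤ I :=
    Finset.sum_nonneg fun l _ => (inv_nonneg).2 (hc l).le
  set B : ℝ := M * I with hBdef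
  have hB0 : (0:ℝ) ≤ B := mul_nonneg (by linarith) hI0
  set ε : ℝ := (Real.exp 1 * (1 + B))⁻¹ with hεdef
  have hexp : (0:ℝ) < Real.exp 1 := Real.exp_pos 1
  have h1B : (0:ℝ) < 1 + B := by linarith
  have hε0 : (0:ℝ) < ε := by positivity
  have hεe : ε ≤ (Real.exp 1)⁻¹ := by
    rw [hεdef]
    apply inv_anti₀ hexp
    nlinarith
  have hεB : ε * B ≤ 1 / 2 := by
    have h2e : (2:ℝ) ≤ Real.exp 1 := by
      have := Real.exp_one_gt_d9; linarith
    have h1 : ε * B ≤ ε * (1 + B) := by nlinarith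
    have h2 : ε * (1 + B) = (Real.exp 1)⁻¹ := by
      rw [hεdef]; field_simp
    rw [h2] at h1
    have : (Real.exp 1)⁻¹ ≤ 1 / 2 := by
      rw [inv_le_comm₀ (by linarith) (by norm_num)]; linarith
    linarith
  have hlogε : Real.log ε ≤ -1 := by
    have h1 : Real.log ε ≤ Real.log (Real.exp 1)⁻¹ := Real.log_le_log hε0 hεe
    have h2 : Real.log (Real.exp 1)⁻¹ = -1 := by
      rw [Real.log_inv, Real.log_exp]
    linarith
  -- the key linearized log bound
  have hlog : ∀ t : ℝ, 0 ≤ t → Real.log t ≤ ε * t - 1 - Real.log ε := by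
    intro t ht
    rcases eq_or_lt_of_le ht with h | h
    · rw [← h, Real.log_zero]; nlinarith
    · have h1 : Real.log (ε * t) ≤ ε * t - 1 :=
        Real.log_le_sub_one_of_pos (by positivity)
      rw [Real.log_mul (ne_of_gt hε0) (ne_of_gt h)] at h1
      linarith
  set C : ℝ := ∑ l, c l with hCdef
  set D : ℝ := max 0 (2 * (C - 1 - Real.log ε)) with hDdef
  have hD0 : (0:ℝ) ≤ D := le_max_left _ _
  refine ⟨D * I, ?_⟩
  intro p hp hp1 η hη hmax l
  set T : ℝ := ∑ l, η l * c l with hTdef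
  have hT0 : (0:ℝ) ≤ T :=
    Finset.sum_nonneg fun l _ => mul_nonneg (hη l) (hc l).le
  have hηT : ∀ l, η l * c l ≤ T := fun l =>
    Finset.single_le_sum (fun l _ => mul_nonneg (hη l) (hc l).le) (Finset.mem_univ l)
  have hηc : ∀ l, η l ≤ T * (c l)⁻¹ := by
    intro l
    rw [mul_comm, ← div_eq_inv_mul, le_div_iff₀ (hc l)]
    exact hηT l
  -- lower bound: value at the all-ones vector
  have hones : ∀ l : Fin L, (0:ℝ) ≤ (fun _ : Fin L => (1:ℝ)) l := fun _ => zero_le_one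
  have hlow : -C ≤ ∑ r, p r * (Real.log (∑ l, (fun _ : Fin L => (1:ℝ)) l * A l r)
      - ∑ l, (fun _ : Fin L => (1:ℝ)) l * c l) := by
    have : ∀ r ∈ Finset.univ, p r * (-C) ≤
        p r * (Real.log (∑ l, (1:ℝ) * A l r) - ∑ l, (1:ℝ) * c l) := by
      intro r _
      apply mul_le_mul_of_nonneg_left _ (hp r)
      have hlg : 0 ≤ Real.log (∑ l, (1:ℝ) * A l r) := by
        apply Real.log_nonneg; simpa using hA1 r
      have hCe : (∑ l, (1:ℝ) * c l) = C := by simp [hCdef]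
      linarith
    calc -C = ∑ r, p r * (-C) := by rw [← Finset.sum_mul, hp1]; ring
    _ ≤ _ := by simpa using Finset.sum_le_sum this
  -- upper bound for the value at η
  have hup : ∑ r, p r * (Real.log (∑ l, η l * A l r) - ∑ l, η l * c l)
      ≤ -(T / 2) - 1 - Real.log ε := by
    have hterm : ∀ r, Real.log (∑ l, η l * A l r) - T ≤ -(T / 2) - 1 - Real.log ε := by
      intro r
      have hAr0 : (0:ℝ) ≤ ∑ l, η l * A l r :=
        Finset.sum_nonneg fun l _ => mul_nonneg (hη l) (hA l r)
      have hArB : (∑ l, η l * A l r) ≤ B * T := by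
        have : ∀ l ∈ Finset.univ, η l * A l r ≤ (T * (c l)⁻¹) * M := by
          intro l _
          exact mul_le_mul (hηc l) (hAM l r) (hA l r)
            (mul_nonneg hT0 (inv_nonneg.2 (hc l).le))
        calc (∑ l, η l * A l r) ≤ ∑ l, (T * (c l)⁻¹) * M :=
              Finset.sum_le_sum this
        _ = B * T := by rw [hBdef, hIdef, ← Finset.sum_mul, ← Finset.mul_sum]; ring
      have h1 : Real.log (∑ l, η l * A l r) ≤ ε * (B * T) - 1 - Real.log ε := by
        have := hlog _ hAr0
        have h2 : ε * (∑ l, η l * A l r) ≤ ε * (B * T) :=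
          mul_le_mul_of_nonneg_left hArB hε0.le
        linarith
      have h3 : ε * (B * T) ≤ T / 2 := by
        calc ε * (B * T) = (ε * B) * T := by ring
        _ ≤ (1/2) * T := mul_le_mul_of_nonneg_right hεB hT0
        _ = T / 2 := by ring
      linarith
    have : ∀ r ∈ Finset.univ, p r * (Real.log (∑ l, η l * A l r) - ∑ l, η l * c l)
        ≤ p r * (-(T / 2) - 1 - Real.log ε) := by
      intro r _
      exact mul_le_mul_of_nonneg_left (by rw [← hTdef]; exact hterm r) (hp r)
    calc ∑ r, p r * (Real.log (∑ l, η l * A l r) - ∑ l, η l * c l)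
        ≤ ∑ r, p r * (-(T / 2) - 1 - Real.log ε) := Finset.sum_le_sum this
    _ = -(T / 2) - 1 - Real.log ε := by rw [← Finset.sum_mul, hp1, one_mul]
  have hcomp := hmax (fun _ => 1) hones
  have hTD : T ≤ D := by
    have h1 : -C ≤ -(T / 2) - 1 - Real.log ε := le_trans hlow (le_trans hcomp hup)
    have h2 : T ≤ 2 * (C - 1 - Real.log ε) := by linarith
    exact le_trans h2 (le_max_right _ _)
  calc η l ≤ T * (c l)⁻¹ := hηc l
  _ ≤ D * (c l)⁻¹ := mul_le_mul_of_nonneg_right hTD (inv_nonneg.2 (hc l).le)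
  _ ≤ D * I := by
      apply mul_le_mul_of_nonneg_left _ hD0
      exact Finset.single_le_sum (fun l _ => inv_nonneg.2 (hc l).le) (Finset.mem_univ l)
end
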